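/- arXiv:1310.3097 — 10 statements merged into one kernel-verified Lean document; each statement's English description precedes it below -/
import Mathlib

section
/- Let (X,d) be a complete bounded metric space, m, n ∈ ℕ, and let f_1, ..., f_n : X^m → X be generalized φ-contractions for a common comparison function φ. Define F : 𝒦(X)^m → 𝒦(X) by F(D_1,...,D_m) = ⋃_{i=1}^n f_i(D_1 × ... × D_m), where 𝒦(X) is the space of nonempty compact subsets with the Hausdorff metric. Then there exists a unique A ∈ 𝒦(X) with F(A,...,A) = A. -/
open Filter Topology NNReal TopologicalSpace Metric

/-!
The Hutchinson operator `F` of the GIFS is itself a generalized `φ`-contraction on the complete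
space `𝒦(X)`: a point `f i a` of `F(A,…,A)`, with all coordinates of `a` in `A`, lies within
`φ(H(A,B))` of the point `f i b` of `F(B,…,B)`, where each `b j` is a point of the compact set
`B` nearest to `a j`. The attractor is then the fixed point given by the Boyd–Wong theorem: the
iterates of a `φ`-contraction form a Cauchy sequence because `φ^[k] t → 0` (upper semicontinuity
forbids a positive limit `L`, which would satisfy `L ≤ φ L`), and their limit is the unique
fixed point.
-/

section ComparisonFunction

variable {φ : ℝ≥0 → ℝ≥0}

lemma comparison_le_self (hmono : Monotone φ) (hlt : ∀ t, 0 < t → φ t < t) (t : ℝ≥0) :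
    φ t ≤ t := by
  rcases eq_zero_or_pos t with rfl | ht
  · by_contra! h
    exact (hmono h.le).not_gt (hlt _ h)
  · exact (hlt t ht).le

lemma tendsto_iterate_comparison (hmono : Monotone φ) (husc : UpperSemicontinuous φ)
    (hlt : ∀ t, 0 < t → φ t < t) (t : ℝ≥0) :
    Tendsto (fun k => φ^[k] t) atTop (𝓝 0) := by
  have hanti : Antitone fun k => φ^[k] t := antitone_nat_of_succ_le fun k => by
    rw [Function.iterate_succ_apply']
    exact comparison_le_self hmono hlt _
  have hlim := tendsto_atTop_ciInf hanti (OrderBot.bddBelow _)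
  set L := ⨅ k, φ^[k] t
  rcases eq_zero_or_pos L with hL | hL
  · rwa [hL] at hlim
  obtain ⟨k, hk⟩ := (hlim.eventually (husc L L (hlt L hL))).exists
  have hk' : φ^[k + 1] t < L := by rwa [Function.iterate_succ_apply']
  exact absurd (ciInf_le (OrderBot.bddBelow _) (k + 1)) hk'.not_ge

lemma lipschitzWith_one_of_nndist_le_comparison {Y Z : Type*} [PseudoMetricSpace Y]
    [PseudoMetricSpace Z] {g : Y → Z} (hmono : Monotone φ) (hlt : ∀ t, 0 < t → φ t < t)
    (hg : ∀ x y, nndist (g x) (g y) ≤ φ (nndist x y)) :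
    LipschitzWith 1 g :=
  LipschitzWith.mk_one fun x y => by
    simpa only [dist_nndist, NNReal.coe_le_coe] using
      (hg x y).trans (comparison_le_self hmono hlt _)

end ComparisonFunction

section IterateComparison

variable {Y : Type*} [PseudoMetricSpace Y] {φ : ℝ≥0 → ℝ≥0} {F : Y → Y}

lemma nndist_iterate_succ_le (hmono : Monotone φ)
    (hF : ∀ x y, nndist (F x) (F y) ≤ φ (nndist x y)) (x : Y) (k : ℕ) :
    nndist (F^[k] x) (F^[k + 1] x) ≤ φ^[k] (nndist x (F x)) := by
  induction k with
  | zero => simp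
  | succ k ih =>
    have h := (hF (F^[k] x) (F^[k + 1] x)).trans (hmono ih)
    rwa [← Function.iterate_succ_apply' F, ← Function.iterate_succ_apply' F,
      ← Function.iterate_succ_apply' φ] at h

/-- Once a step of the orbit is shorter than `ε - φ ε`, the orbit never leaves the `ε`-ball
around that point: the next point is `φ ε`-close to the image of the ball's center. -/
lemma nndist_iterate_add_le (hmono : Monotone φ) (hlt : ∀ t, 0 < t → φ t < t)
    (hF : ∀ x y, nndist (F x) (F y) ≤ φ (nndist x y)) {x : Y} {N : ℕ} {ε : ℝ≥0}
    (hN : nndist (F^[N] x) (F^[N + 1] x) ≤ ε - φ ε) (p : ℕ) :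
    nndist (F^[N + p] x) (F^[N] x) ≤ ε := by
  induction p with
  | zero => simp
  | succ p ih =>
    calc nndist (F^[N + (p + 1)] x) (F^[N] x)
        ≤ nndist (F (F^[N + p] x)) (F (F^[N] x)) + nndist (F^[N + 1] x) (F^[N] x) := by
          rw [← add_assoc, Function.iterate_succ_apply', ← Function.iterate_succ_apply' F N]
          exact nndist_triangle _ _ _
      _ ≤ φ ε + (ε - φ ε) := add_le_add ((hF _ _).trans (hmono ih)) (by rwa [nndist_comm])
      _ = ε := add_tsub_cancel_of_le (comparison_le_self hmono hlt ε)

lemma cauchySeq_iterate_of_nndist_le_comparison (hmono : Monotone φ)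
    (husc : UpperSemicontinuous φ) (hlt : ∀ t, 0 < t → φ t < t)
    (hF : ∀ x y, nndist (F x) (F y) ≤ φ (nndist x y)) (x : Y) :
    CauchySeq fun k => F^[k] x := by
  have hstep : Tendsto (fun k => nndist (F^[k] x) (F^[k + 1] x)) atTop (𝓝 0) :=
    tendsto_of_tendsto_of_tendsto_of_le_of_le tendsto_const_nhds
      (tendsto_iterate_comparison hmono husc hlt _) (fun _ => zero_le)
      (nndist_iterate_succ_le hmono hF x)
  refine Metric.cauchySeq_iff'.2 fun ε hε => ?_
  lift ε to ℝ≥0 using hε.le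
  replace hε : 0 < ε := NNReal.coe_pos.1 hε
  obtain ⟨N, hN⟩ :=
    (hstep.eventually_lt_const (tsub_pos_of_lt (hlt (ε / 2) (half_pos hε)))).exists
  refine ⟨N, fun k hk => ?_⟩
  obtain ⟨p, rfl⟩ := Nat.exists_eq_add_of_le hk
  rw [dist_nndist, NNReal.coe_lt_coe]
  exact (nndist_iterate_add_le hmono hlt hF hN.le p).trans_lt (half_lt_self hε)

end IterateComparison

/-- The Boyd–Wong fixed point theorem. -/
theorem existsUnique_isFixedPt_of_nndist_le_comparison {Y : Type*} [MetricSpace Y]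
    [CompleteSpace Y] [Nonempty Y] {φ : ℝ≥0 → ℝ≥0} {F : Y → Y}
    (hmono : Monotone φ) (husc : UpperSemicontinuous φ) (hlt : ∀ t, 0 < t → φ t < t)
    (hF : ∀ x y, nndist (F x) (F y) ≤ φ (nndist x y)) :
    ∃! z, Function.IsFixedPt F z := by
  obtain ⟨x⟩ := ‹Nonempty Y›
  obtain ⟨z, hz⟩ := cauchySeq_tendsto_of_complete
    (cauchySeq_iterate_of_nndist_le_comparison hmono husc hlt hF x)
  have hFz : Function.IsFixedPt F z := isFixedPt_of_tendsto_iterate hz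
    (lipschitzWith_one_of_nndist_le_comparison hmono hlt hF).continuous.continuousAt
  refine ⟨z, hFz, fun w hFw => ?_⟩
  by_contra hne
  have hpos : 0 < nndist w z := pos_iff_ne_zero.2 (mt nndist_eq_zero.1 hne)
  have := hF w z
  rw [hFw, hFz] at this
  exact this.not_gt (hlt _ hpos)

section Hutchinson

variable {X ι κ : Type*}

def hutchinson (f : ι → (κ → X) → X) (A : Set X) : Set X :=
  ⋃ i, f i '' Set.univ.pi fun _ => A

def TopologicalSpace.NonemptyCompacts.hutchinson [TopologicalSpace X] [Finite ι] [Nonempty ι]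
    (f : ι → (κ → X) → X) (hf : ∀ i, Continuous (f i)) (K : NonemptyCompacts X) :
    NonemptyCompacts X where
  carrier := _root_.hutchinson f K
  isCompact' := isCompact_iUnion fun i =>
    (isCompact_univ_pi fun _ => K.isCompact).image (hf i)
  nonempty' := by
    obtain ⟨x, hx⟩ := K.nonempty
    obtain ⟨i⟩ := ‹Nonempty ι›
    exact ⟨f i fun _ => x, Set.mem_iUnion.2 ⟨i, Set.mem_image_of_mem _ fun _ _ => hx⟩⟩

lemma IsCompact.exists_edist_le_hausdorffEDist [PseudoEMetricSpace X] {A B : Set X}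
    (hB : IsCompact B) (hB' : B.Nonempty) {x : X} (hx : x ∈ A) :
    ∃ y ∈ B, edist x y ≤ hausdorffEDist A B := by
  obtain ⟨y, hy, hxy⟩ := hB.exists_infEDist_eq_edist hB' x
  exact ⟨y, hy, hxy ▸ infEDist_le_hausdorffEDist_of_mem hx⟩

variable [Fintype κ]

lemma IsCompact.exists_mem_pi_edist_le_hausdorffEDist [PseudoEMetricSpace X] {A B : Set X}
    (hB : IsCompact B) (hB' : B.Nonempty) {a : κ → X} (ha : a ∈ Set.univ.pi fun _ => A) :
    ∃ b ∈ Set.univ.pi (fun _ => B), edist a b ≤ hausdorffEDist A B := by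
  choose b hb hab using fun j => hB.exists_edist_le_hausdorffEDist hB' (ha j (Set.mem_univ j))
  exact ⟨b, fun j _ => hb j, edist_pi_le_iff.2 hab⟩

lemma exists_edist_le_of_mem_hutchinson [MetricSpace X] {φ : ℝ≥0 → ℝ≥0}
    (hmono : Monotone φ) {f : ι → (κ → X) → X}
    (hf : ∀ i x y, nndist (f i x) (f i y) ≤ φ (nndist x y))
    (K L : NonemptyCompacts X) {u : X} (hu : u ∈ hutchinson f K) :
    ∃ v ∈ hutchinson f L, edist u v ≤ φ (nndist K L) := by
  obtain ⟨i, a, ha, rfl⟩ := Set.mem_iUnion.1 hu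
  obtain ⟨b, hb, hab⟩ := L.isCompact.exists_mem_pi_edist_le_hausdorffEDist L.nonempty ha
  have hab' : nndist a b ≤ nndist K L := by
    rw [← ENNReal.coe_le_coe, ← edist_nndist, ← edist_nndist]
    exact hab
  refine ⟨f i b, Set.mem_iUnion.2 ⟨i, Set.mem_image_of_mem _ hb⟩, ?_⟩
  rw [edist_nndist, ENNReal.coe_le_coe]
  exact (hf i a b).trans (hmono hab')

lemma nndist_hutchinson_le [MetricSpace X] [Finite ι] [Nonempty ι] {φ : ℝ≥0 → ℝ≥0}
    (hmono : Monotone φ) {f : ι → (κ → X) → X}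
    (hf : ∀ i x y, nndist (f i x) (f i y) ≤ φ (nndist x y))
    (hc : ∀ i, Continuous (f i)) (K L : NonemptyCompacts X) :
    nndist (K.hutchinson f hc) (L.hutchinson f hc) ≤ φ (nndist K L) := by
  rw [← ENNReal.coe_le_coe, ← edist_nndist]
  refine hausdorffEDist_le_of_mem_edist (fun u hu => ?_) (fun u hu => ?_)
  · exact exists_edist_le_of_mem_hutchinson hmono hf K L hu
  · exact nndist_comm K L ▸ exists_edist_le_of_mem_hutchinson hmono hf L K hu

end Hutchinson

lemma TopologicalSpace.NonemptyCompacts.existsUnique_iff {X : Type*} [TopologicalSpace X]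
    {P : Set X → Prop} :
    (∃! K : NonemptyCompacts X, P K) ↔
      ∃! A : Set X, (A.Nonempty ∧ IsCompact A) ∧ P A := by
  constructor
  · rintro ⟨K, hK, huniq⟩
    refine ⟨K, ⟨⟨K.nonempty, K.isCompact⟩, hK⟩, fun A ⟨⟨hne, hc⟩, hA⟩ => ?_⟩
    exact congrArg SetLike.coe (huniq ⟨⟨A, hc⟩, hne⟩ hA)
  · rintro ⟨A, ⟨⟨hne, hc⟩, hA⟩, huniq⟩
    exact ⟨⟨⟨A, hc⟩, hne⟩, hA, fun K hK =>
      NonemptyCompacts.ext (huniq K ⟨⟨K.nonempty, K.isCompact⟩, hK⟩)⟩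

theorem gifs_attractor_exists_unique_general
    {X : Type*} [MetricSpace X] [CompleteSpace X] [Nonempty X]
    {m n : ℕ} (hn : 0 < n)
    (φ : ℝ≥0 → ℝ≥0)
    (hmono : Monotone φ) (husc : UpperSemicontinuous φ)
    (hlt : ∀ t : ℝ≥0, 0 < t → φ t < t)
    (f : Fin n → (Fin m → X) → X)
    (hf : ∀ i, ∀ x y : Fin m → X, nndist (f i x) (f i y) ≤ φ (nndist x y)) :
    ∃! A : Set X, (A.Nonempty ∧ IsCompact A) ∧
      (⋃ i, f i '' Set.univ.pi fun _ => A) = A := by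
  have : Nonempty (Fin n) := ⟨⟨0, hn⟩⟩
  have hc i : Continuous (f i) :=
    (lipschitzWith_one_of_nndist_le_comparison hmono hlt (hf i)).continuous
  obtain ⟨K, hK, huniq⟩ := existsUnique_isFixedPt_of_nndist_le_comparison hmono husc hlt
    (nndist_hutchinson_le hmono hf hc)
  exact NonemptyCompacts.existsUnique_iff.1
    ⟨K, congrArg SetLike.coe hK, fun L hL => huniq L (NonemptyCompacts.ext hL)⟩

/-- A GIFS `(f_1,…,f_n)` of order `m` on a complete bounded metric
space, consisting of generalized `φ`-contractions for a common comparison function `φ`,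
has a unique set `A ∈ 𝒦(X)` (nonempty compact) with
`F(A,…,A) = ⋃ i, f_i(A × ⋯ × A) = A`. -/
theorem gifs_attractor_exists_unique
    {X : Type*} [MetricSpace X] [CompleteSpace X] [Nonempty X]
    (hbdd : Bornology.IsBounded (Set.univ : Set X))
    {m n : ℕ} (hm : 0 < m) (hn : 0 < n)
    (φ : ℝ≥0 → ℝ≥0)
    (hmono : Monotone φ) (husc : UpperSemicontinuous φ)
    (hlt : ∀ t : ℝ≥0, 0 < t → φ t < t)
    (f : Fin n → (Fin m → X) → X)
    (hf : ∀ i, ∀ x y : Fin m → X, nndist (f i x) (f i y) ≤ φ (nndist x y)) :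
    ∃! A : Set X, (A.Nonempty ∧ IsCompact A) ∧
      (⋃ i, f i '' Set.univ.pi fun _ => A) = A :=
  gifs_attractor_exists_unique_general hn φ hmono husc hlt f hf
end

section
/- Fix n, m ∈ ℕ with n, m ≥ 1. Define sets Ω_1 = {1,...,n} and Ω_{k+1} = (Ω_k)^m, and let Ω = Π_{i∈ℕ} Ω_i with the metric d(α,β) = Σ_{i∈ℕ} d_i(α^i, β^i)/(m+1)^i, where d_i is the discrete (0-1) metric on Ω_i. For j ∈ {1,...,n}, define τ_j : Ω^m → Ω by τ_j(α_1,...,α_m) = (j, (α_1^1,...,α_m^1), (α_1^2,...,α_m^2), ...). Then each τ_j is Lipschitz with constant at most m/(m+1) with respect to the maximum metric on Ω^m. -/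
open Filter Topology NNReal

/-- The levels of the code space: `Ω_1 = {1,…,n}`, `Ω_{k+1} = (Ω_k)^m`
(here indexed from `0`). -/
def OmegaL (n m : ℕ) : ℕ → Type
  | 0 => Fin n
  | k + 1 => Fin m → OmegaL n m k

/-- The code space `Ω = Π_k Ω_k`. -/
abbrev CodeSpace (n m : ℕ) : Type := ∀ k : ℕ, OmegaL n m k

instance OmegaL.decEq (n m : ℕ) : ∀ k, DecidableEq (OmegaL n m k)
  | 0 => inferInstanceAs (DecidableEq (Fin n))
  | k + 1 => letI := OmegaL.decEq n m k
             inferInstanceAs (DecidableEq (Fin m → OmegaL n m k))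

instance OmegaL.fintype (n m : ℕ) : ∀ k, Fintype (OmegaL n m k)
  | 0 => inferInstanceAs (Fintype (Fin n))
  | k + 1 => letI := OmegaL.fintype n m k
             inferInstanceAs (Fintype (Fin m → OmegaL n m k))

instance OmegaL.topologicalSpace (n m k : ℕ) : TopologicalSpace (OmegaL n m k) := ⊥

instance OmegaL.discreteTopology (n m k : ℕ) : DiscreteTopology (OmegaL n m k) := ⟨rfl⟩

/-- The metric `d(α,β) = Σ_k d_k(α^k,β^k)/(m+1)^{k+1}` on `Ω`,
where `d_k` is the 0-1 (discrete) metric on `Ω_k`. -/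
noncomputable def codeDist {n m : ℕ} (α β : CodeSpace n m) : ℝ :=
  ∑' k : ℕ, (if α k = β k then 0 else 1) / (m + 1) ^ (k + 1)

/-- The shift maps `τ_j : Ω^m → Ω`,
`τ_j(α_1,…,α_m) = (j, (α_1^1,…,α_m^1), (α_1^2,…,α_m^2), …)`. -/
def tau {n m : ℕ} (j : Fin n) (a : Fin m → CodeSpace n m) : CodeSpace n m :=
  fun k => match k with
  | 0 => j
  | k + 1 => fun i => a i k

/-!
Level `0` of `τ_j a` and `τ_j b` is `j` for both, and level `k + 1` of them differs only if
some `a i` and `b i` differ at level `k`. As level `k + 1` carries weight `(m + 1)⁻¹` times that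
of level `k`, this gives
`d(τ_j a, τ_j b) ≤ (m + 1)⁻¹ ∑ i, d(a i, b i) ≤ m / (m + 1) · maxᵢ d(a i, b i)`.
-/

lemma ite_eq_le_sum_ite_eq {ι : Type*} [Fintype ι] {β : ι → Type*} [∀ i, DecidableEq (β i)]
    [DecidableEq (∀ i, β i)] (f g : ∀ i, β i) :
    (if f = g then (0 : ℝ) else 1) ≤ ∑ i, if f i = g i then (0 : ℝ) else 1 := by
  split_ifs with hfg
  · exact Finset.sum_nonneg fun i _ => by split_ifs <;> norm_num
  · obtain ⟨i, hi⟩ := Function.ne_iff.mp hfg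
    calc (1 : ℝ) = if f i = g i then 0 else 1 := (if_neg hi).symm
      _ ≤ ∑ i, if f i = g i then (0 : ℝ) else 1 :=
        Finset.single_le_sum (f := fun i => if f i = g i then (0 : ℝ) else 1)
          (fun i _ => by split_ifs <;> norm_num) (Finset.mem_univ i)

lemma sum_le_card_mul_ciSup {ι : Type*} [Fintype ι] (f : ι → ℝ) :
    ∑ i, f i ≤ Fintype.card ι * ⨆ i, f i := by
  simpa using Finset.sum_le_card_nsmul Finset.univ f _
    fun i _ => le_ciSup (Set.finite_range f).bddAbove i

section CodeSpace

variable {n m : ℕ}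

noncomputable def codeDistTerm (α β : CodeSpace n m) (k : ℕ) : ℝ :=
  (if α k = β k then 0 else 1) / (m + 1) ^ (k + 1)

lemma codeDist_eq_tsum (α β : CodeSpace n m) :
    codeDist α β = ∑' k, codeDistTerm α β k :=
  rfl

lemma codeDistTerm_nonneg (α β : CodeSpace n m) (k : ℕ) : 0 ≤ codeDistTerm α β k := by
  unfold codeDistTerm
  split_ifs <;> positivity

lemma codeDistTerm_le (α β : CodeSpace n m) (k : ℕ) :
    codeDistTerm α β k ≤ ((m + 1 : ℝ)⁻¹) ^ (k + 1) := by
  rw [inv_pow, codeDistTerm, ← one_div]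
  gcongr
  split_ifs <;> norm_num

lemma summable_codeDistTerm (hm : 0 < m) (α β : CodeSpace n m) :
    Summable (codeDistTerm α β) := by
  have hr : (m + 1 : ℝ)⁻¹ < 1 := inv_lt_one_of_one_lt₀ (by norm_cast; omega)
  exact Summable.of_nonneg_of_le (codeDistTerm_nonneg α β) (codeDistTerm_le α β)
    ((_root_.summable_nat_add_iff 1).mpr (summable_geometric_of_lt_one (by positivity) hr))

lemma codeDistTerm_tau_zero (j : Fin n) (a b : Fin m → CodeSpace n m) :
    codeDistTerm (tau j a) (tau j b) 0 = 0 := by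
  have h0 : tau j a 0 = tau j b 0 := rfl
  rw [codeDistTerm, if_pos h0, zero_div]

lemma codeDistTerm_tau_succ_le (j : Fin n) (a b : Fin m → CodeSpace n m) (k : ℕ) :
    codeDistTerm (tau j a) (tau j b) (k + 1) ≤
      (m + 1 : ℝ)⁻¹ * ∑ i, codeDistTerm (a i) (b i) k := by
  simp only [codeDistTerm, ← Finset.sum_div, pow_succ' _ (k + 1), div_mul_eq_div_div_swap,
    div_eq_inv_mul _ (m + 1 : ℝ)]
  gcongr
  exact ite_eq_le_sum_ite_eq (fun i => a i k) (fun i => b i k)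

lemma codeDist_tau_le (hm : 0 < m) (j : Fin n) (a b : Fin m → CodeSpace n m) :
    codeDist (tau j a) (tau j b) ≤ (m + 1 : ℝ)⁻¹ * ∑ i, codeDist (a i) (b i) := by
  have hsummable : Summable fun k => ∑ i, codeDistTerm (a i) (b i) k :=
    summable_sum fun i _ => summable_codeDistTerm hm (a i) (b i)
  calc codeDist (tau j a) (tau j b)
      = ∑' k, codeDistTerm (tau j a) (tau j b) (k + 1) := by
        rw [codeDist_eq_tsum, (summable_codeDistTerm hm _ _).tsum_eq_zero_add,
          codeDistTerm_tau_zero, zero_add]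
    _ ≤ ∑' k, (m + 1 : ℝ)⁻¹ * ∑ i, codeDistTerm (a i) (b i) k :=
        Summable.tsum_le_tsum (codeDistTerm_tau_succ_le j a b)
          ((_root_.summable_nat_add_iff 1).mpr (summable_codeDistTerm hm _ _))
          (hsummable.mul_left _)
    _ = (m + 1 : ℝ)⁻¹ * ∑ i, codeDist (a i) (b i) := by
        rw [_root_.tsum_mul_left, Summable.tsum_finsetSum fun i _ => summable_codeDistTerm hm _ _]
        rfl

end CodeSpace

theorem tau_lipschitz_general {n m : ℕ} (hm : 0 < m) (j : Fin n)
    (a b : Fin m → CodeSpace n m) :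
    codeDist (tau j a) (tau j b) ≤
      (m / (m + 1) : ℝ) * ⨆ i : Fin m, codeDist (a i) (b i) := by
  calc codeDist (tau j a) (tau j b)
      ≤ (m + 1 : ℝ)⁻¹ * ∑ i, codeDist (a i) (b i) := codeDist_tau_le hm j a b
    _ ≤ (m + 1 : ℝ)⁻¹ * (m * ⨆ i : Fin m, codeDist (a i) (b i)) := by
        grw [sum_le_card_mul_ciSup, Fintype.card_fin]
    _ = (m / (m + 1) : ℝ) * ⨆ i : Fin m, codeDist (a i) (b i) := by ring

/-- Each shift map `τ_j` is Lipschitz with constant `m/(m+1)`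
with respect to the maximum metric on `Ω^m`. -/
theorem tau_lipschitz {n m : ℕ} (hn : 0 < n) (hm : 0 < m) (j : Fin n)
    (a b : Fin m → CodeSpace n m) :
    codeDist (tau j a) (tau j b) ≤
      (m / (m + 1) : ℝ) * ⨆ i : Fin m, codeDist (a i) (b i) :=
  tau_lipschitz_general hm j a b
end

section
/- With Ω, τ_1,...,τ_n as above, the union ⋃_{j=1}^n τ_j(Ω × ... × Ω) (m factors) equals Ω. In particular, Ω is the attractor of the GIFS (τ_1,...,τ_n) on Ω. -/
open Filter Topology NNReal

/-- The paper's `α(i) = (α^2_i, α^3_i, …)`. -/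
def CodeSpace.branch {n m : ℕ} (α : CodeSpace n m) (i : Fin m) : CodeSpace n m :=
  fun k => α (k + 1) i

theorem tau_head_branch {n m : ℕ} (α : CodeSpace n m) : tau (α 0) α.branch = α := by
  funext k
  cases k <;> rfl

theorem tau_union_eq_univ_general {n m : ℕ} :
    (⋃ j : Fin n, tau (m := m) j '' Set.univ) = Set.univ :=
  Set.eq_univ_of_forall fun α =>
    Set.mem_iUnion.2 ⟨α 0, α.branch, Set.mem_univ _, tau_head_branch α⟩

/-- `⋃_{j=1}^n τ_j(Ω × ⋯ × Ω) = Ω`: the code space `Ω` is the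
attractor of the GIFS `(τ_1,…,τ_n)` on `Ω`. -/
theorem tau_union_eq_univ {n m : ℕ} (hn : 0 < n) (hm : 0 < m) :
    (⋃ j : Fin n, tau (m := m) j '' Set.univ) = Set.univ :=
  tau_union_eq_univ_general
end

section
/- Let (X,d) be a complete metric space and S = (f_1,...,f_n) a GIFS of order m with comparison function φ with attractor A. Define inductively for α ∈ Ω^k maps f_α and sets A_α = f_α(A_k) (where A_1 = A^m, A_{k+1} = (A_k)^m). Then for every α ∈ Ω^k, A_α = ⋃_{β ∈ Ω_{k+1}} A_{α ⌢ β}, where α ⌢ β denotes the concatenation extending α by β. -/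
open Filter Topology NNReal

/-- The iterated product spaces `X_1 = X^m`, `X_{k+1} = (X_k)^m`
(indexed from `0`). -/
def Xk (X : Type*) (m : ℕ) : ℕ → Type _
  | 0 => Fin m → X
  | k + 1 => Fin m → Xk X m k

/-- For a code `α = (α^1, α^2, …)`, the code `α(i) = (α^2_i, α^3_i, …)`. -/
def shiftCode {n m : ℕ} (α : CodeSpace n m) (i : Fin m) : CodeSpace n m :=
  fun k => (α (k + 1) : Fin m → OmegaL n m k) i

/-- The maps `f_α : X_{k+1} → X` for `α` (a code restricted to its first `k+1`
symbols): `f_{(α^1)} = f_{α^1}` and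
`f_α(x_1,…,x_m) = f_{α^1}(f_{α(1)}(x_1),…,f_{α(m)}(x_m))`. -/
def fA {X : Type*} {n m : ℕ} (f : Fin n → (Fin m → X) → X) :
    ∀ k : ℕ, CodeSpace n m → Xk X m k → X
  | 0, α, x => f (α 0) x
  | k + 1, α, x => f (α 0) (fun i => fA f k (shiftCode α i) ((x : Fin m → Xk X m k) i))

/-- The iterated products `K_1 = K^m`, `K_{k+1} = (K_k)^m` of a set `K ⊆ X`. -/
def Spow {X : Type*} (m : ℕ) (K : Set X) : ∀ k : ℕ, Set (Xk X m k)
  | 0 => Set.univ.pi fun _ => K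
  | k + 1 => (Set.univ.pi fun _ => Spow m K k : Set (Fin m → Xk X m k))

/-- The diagonal points `x^1 = x`, `x^{k+1} = (x^k,…,x^k)`. -/
def diag {X : Type*} {m : ℕ} (x : Fin m → X) : ∀ k : ℕ, Xk X m k
  | 0 => x
  | k + 1 => (fun _ => diag x k : Fin m → Xk X m k)

/-- Extending a code `α` (thought of as its first `k+1` symbols `α^1,…,α^{k+1}`)
by a new symbol `β ∈ Ω_{k+2}`: the concatenation `α ⌢ β`. -/
def extendCode {n m : ℕ} (α : CodeSpace n m) (k : ℕ) (β : OmegaL n m (k + 1)) :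
    CodeSpace n m :=
  fun j => if h : j = k + 1 then cast (congrArg (OmegaL n m) h.symm) β else α j

/-! The attractor satisfies `A = ⋃ⱼ fⱼ(Aᵐ)`, and a product of unions is a union of products, so
`A_α = f_{α^1}(Aᵐ)` splits into the pieces `f_{α^1}(f_{β_1}(Aᵐ), …, f_{β_m}(Aᵐ))`. For longer codes,
`A_α = f_{α^1}(A_{α(1)} × ⋯ × A_{α(m)})`, and the decomposition of the `A_{α(i)}` (induction on
the length) distributes over the product in the same way. -/

lemma extendCode_zero {n m : ℕ} (α : CodeSpace n m) (k : ℕ) (β : OmegaL n m (k + 1)) :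
    extendCode α k β 0 = α 0 := by
  simp [extendCode]

lemma shiftCode_extendCode_zero {n m : ℕ} (α : CodeSpace n m) (β : OmegaL n m 1) (i : Fin m) :
    shiftCode (extendCode α 0 β) i 0 = β i := by
  simp [shiftCode, extendCode]

lemma shiftCode_extendCode {n m : ℕ} (α : CodeSpace n m) (k : ℕ) (β : OmegaL n m (k + 2))
    (i : Fin m) :
    shiftCode (extendCode α (k + 1) β) i = extendCode (shiftCode α i) k (β i) := by
  funext j
  by_cases h : j = k + 1
  · subst h
    simp [shiftCode, extendCode]
  · simp [shiftCode, extendCode, h]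

section Pieces

variable {X : Type*} {n m : ℕ} (f : Fin n → (Fin m → X) → X)

lemma image_fA_zero (α : CodeSpace n m) (K : Set X) :
    fA f 0 α '' Spow m K 0 = f (α 0) '' Set.univ.pi fun _ => K :=
  rfl

lemma image_fA_succ (k : ℕ) (α : CodeSpace n m) (K : Set X) :
    fA f (k + 1) α '' Spow m K (k + 1) =
      f (α 0) '' Set.univ.pi fun i => fA f k (shiftCode α i) '' Spow m K k := by
  rw [← Set.piMap_image_univ_pi, ← Set.image_comp]
  rfl

end Pieces

theorem attractor_pieces_decomposition_general
    {X : Type*} {n m : ℕ}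
    (f : Fin n → (Fin m → X) → X)
    (A : Set X)
    (hAfix : (⋃ i, f i '' Set.univ.pi fun _ => A) = A)
    (k : ℕ) (α : CodeSpace n m) :
    fA f k α '' Spow m A k =
      ⋃ β : OmegaL n m (k + 1),
        fA f (k + 1) (extendCode α k β) '' Spow m A (k + 1) := by
  induction k generalizing α with
  | zero =>
    simp only [image_fA_succ f, image_fA_zero, extendCode_zero, shiftCode_extendCode_zero]
    conv_lhs => rw [← hAfix]
    rw [← Set.iUnion_univ_pi, Set.image_iUnion]
    rfl
  | succ k ih =>
    calc fA f (k + 1) α '' Spow m A (k + 1)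
        = f (α 0) '' Set.univ.pi fun i =>
            ⋃ γ, fA f (k + 1) (extendCode (shiftCode α i) k γ) '' Spow m A (k + 1) := by
          rw [image_fA_succ f]
          simp only [ih]
      _ = ⋃ β : OmegaL n m (k + 2), f (α 0) '' Set.univ.pi fun i =>
            fA f (k + 1) (extendCode (shiftCode α i) k (β i)) '' Spow m A (k + 1) := by
          -- `OmegaL n m (k + 2)` unfolds to `Fin m → OmegaL n m (k + 1)`
          rw [← Set.iUnion_univ_pi, Set.image_iUnion]
          rfl
      _ = _ := by
          simp only [image_fA_succ f (k + 1), extendCode_zero, shiftCode_extendCode]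

/-- For a GIFS on a complete metric space with attractor `A`, the
pieces `A_α = f_α(A_k)` satisfy `A_α = ⋃_{β ∈ Ω_{k+2}} A_{α ⌢ β}` (a code of length
`k+1` extended by one more symbol). -/
theorem attractor_pieces_decomposition
    {X : Type*} [MetricSpace X] [CompleteSpace X]
    {n m : ℕ} (hn : 0 < n) (hm : 0 < m)
    (φ : ℝ≥0 → ℝ≥0)
    (hmono : Monotone φ) (husc : UpperSemicontinuous φ)
    (hlt : ∀ t : ℝ≥0, 0 < t → φ t < t)
    (f : Fin n → (Fin m → X) → X)
    (hf : ∀ i, ∀ x y : Fin m → X, nndist (f i x) (f i y) ≤ φ (nndist x y))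
    (A : Set X) (hAne : A.Nonempty) (hAc : IsCompact A)
    (hAfix : (⋃ i, f i '' Set.univ.pi fun _ => A) = A)
    (k : ℕ) (α : CodeSpace n m) :
    fA f k α '' Spow m A k =
      ⋃ β : OmegaL n m (k + 1),
        fA f (k + 1) (extendCode α k β) '' Spow m A (k + 1) :=
  attractor_pieces_decomposition_general f A hAfix k α
end

section
/- Let (X,d) be a metric space, S = (f_1,...,f_n) a GIFS of order m where each f_i is a generalized φ-contraction for a common comparison function φ. Let K ⊂ X be nonempty and bounded with diameter a, and define K_1 = K^m, K_{i+1} = (K_i)^m (with maximum metrics). Then for every α ∈ Ω with restriction α|_k ∈ Ω^k, diam(f_{α|_k}(K_k)) ≤ φ^k(a); consequently diam(f_{α|_k}(K_k)) → 0 as k → ∞. -/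
open Filter Topology NNReal ENNReal

/-! A generalized `φ`-contraction shrinks sup-distances `≤ t` to distances `≤ φ t`, so by
induction on the depth of the code, `f_{α|_k}` maps any two points of `K_k` to points at
distance `≤ φ^k(a)`. The iterates `φ^k(a)` decrease, and their infimum `L` must be `0`:
otherwise upper semicontinuity at `L` together with `φ L < L` would push some iterate
below `L`. -/

section Comparison

variable {β : Type*} {φ : β → β}

theorem map_le_self_of_lt_self [LinearOrder β] [OrderBot β] (hmono : Monotone φ) (hlt : ∀ t, ⊥ < t → φ t < t) (t : β) :
    φ t ≤ t := by
  rcases eq_bot_or_bot_lt t with rfl | ht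
  · by_contra! h
    exact (hmono h.le).not_gt (hlt _ h)
  · exact (hlt t ht).le

theorem antitone_iterate_of_lt_self [LinearOrder β] [OrderBot β] (hmono : Monotone φ)
    (hlt : ∀ t, ⊥ < t → φ t < t) (a : β) : Antitone fun k : ℕ => φ^[k] a :=
  antitone_nat_of_succ_le fun k => by
    rw [Function.iterate_succ_apply']
    exact map_le_self_of_lt_self hmono hlt _

theorem tendsto_iterate_bot_of_lt_self [ConditionallyCompleteLinearOrderBot β]
    [TopologicalSpace β] [OrderTopology β] (hmono : Monotone φ) (husc : UpperSemicontinuous φ)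
    (hlt : ∀ t, ⊥ < t → φ t < t) (a : β) :
    Tendsto (fun k : ℕ => φ^[k] a) atTop (𝓝 ⊥) := by
  have hbdd : BddBelow (Set.range fun k : ℕ => φ^[k] a) := OrderBot.bddBelow _
  have hinf := tendsto_atTop_ciInf (antitone_iterate_of_lt_self hmono hlt a) hbdd
  suffices hL : ⨅ k : ℕ, φ^[k] a = ⊥ by rwa [hL] at hinf
  by_contra hL
  set L := ⨅ k : ℕ, φ^[k] a
  obtain ⟨k, hk⟩ := (hinf.eventually (husc L L (hlt L (bot_lt_iff_ne_bot.mpr hL)))).exists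
  have hLk : L ≤ φ^[k + 1] a := ciInf_le hbdd (k + 1)
  rw [Function.iterate_succ_apply'] at hLk
  exact hk.not_ge hLk

end Comparison

section CodePieces

variable {X : Type*} [MetricSpace X] {n m : ℕ} {φ : ℝ≥0 → ℝ≥0} {f : Fin n → (Fin m → X) → X}

theorem nndist_map_le_of_forall_le (hmono : Monotone φ)
    (hf : ∀ i, ∀ x y : Fin m → X, nndist (f i x) (f i y) ≤ φ (nndist x y))
    (i : Fin n) {x y : Fin m → X} {t : ℝ≥0} (hxy : ∀ j, nndist (x j) (y j) ≤ t) :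
    nndist (f i x) (f i y) ≤ φ t :=
  (hf i x y).trans (hmono (nndist_pi_le_iff.mpr hxy))

theorem nndist_fA_le (hmono : Monotone φ)
    (hf : ∀ i, ∀ x y : Fin m → X, nndist (f i x) (f i y) ≤ φ (nndist x y))
    {K : Set X} {a : ℝ≥0} (hK : ∀ x ∈ K, ∀ y ∈ K, nndist x y ≤ a) :
    ∀ (k : ℕ) (α : CodeSpace n m), ∀ x ∈ Spow m K k, ∀ y ∈ Spow m K k,
      nndist (fA f k α x) (fA f k α y) ≤ φ^[k + 1] a
  | 0, α, x, hx, y, hy =>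
    nndist_map_le_of_forall_le hmono hf (α 0) fun j => hK _ (hx j trivial) _ (hy j trivial)
  | k + 1, α, x, hx, y, hy => by
    rw [Function.iterate_succ_apply']
    exact nndist_map_le_of_forall_le hmono hf (α 0) fun j =>
      nndist_fA_le hmono hf hK k (shiftCode α j) _ (hx j trivial) _ (hy j trivial)

theorem ediam_image_fA_le (hmono : Monotone φ)
    (hf : ∀ i, ∀ x y : Fin m → X, nndist (f i x) (f i y) ≤ φ (nndist x y))
    {K : Set X} {a : ℝ≥0} (hKa : Metric.ediam K ≤ a) (k : ℕ) (α : CodeSpace n m) :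
    Metric.ediam (fA f k α '' Spow m K k) ≤ φ^[k + 1] a := by
  have hK : ∀ x ∈ K, ∀ y ∈ K, nndist x y ≤ a := fun x hx y hy => by
    simpa only [edist_nndist, ENNReal.coe_le_coe] using
      Metric.edist_le_of_ediam_le hx hy hKa
  refine Metric.ediam_le ?_
  rintro _ ⟨x, hx, rfl⟩ _ ⟨y, hy, rfl⟩
  rw [edist_nndist, ENNReal.coe_le_coe]
  exact nndist_fA_le hmono hf hK k α x hx y hy

end CodePieces

theorem diam_code_pieces_le_general
    {X : Type*} [MetricSpace X]
    {n m : ℕ}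
    (φ : ℝ≥0 → ℝ≥0)
    (hmono : Monotone φ) (husc : UpperSemicontinuous φ)
    (hlt : ∀ t : ℝ≥0, 0 < t → φ t < t)
    (f : Fin n → (Fin m → X) → X)
    (hf : ∀ i, ∀ x y : Fin m → X, nndist (f i x) (f i y) ≤ φ (nndist x y))
    (K : Set X) (a : ℝ≥0)
    (hKa : EMetric.diam K = (a : ℝ≥0∞)) (α : CodeSpace n m) :
    (∀ k : ℕ, EMetric.diam (fA f k α '' Spow m K k) ≤ ((φ^[k + 1] a : ℝ≥0) : ℝ≥0∞)) ∧
    Tendsto (fun k : ℕ => EMetric.diam (fA f k α '' Spow m K k)) atTop (𝓝 0) := by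
  have hdiam := ediam_image_fA_le hmono hf hKa.le (α := α)
  have hbound : Tendsto (fun k : ℕ => ((φ^[k + 1] a : ℝ≥0) : ℝ≥0∞)) atTop (𝓝 0) :=
    ENNReal.tendsto_coe.mpr <|
      (tendsto_iterate_bot_of_lt_self hmono husc hlt a).comp (tendsto_add_atTop_nat 1)
  exact ⟨hdiam, tendsto_of_tendsto_of_tendsto_of_le_of_le tendsto_const_nhds hbound
    (fun _ => zero_le) hdiam⟩

/-- If each `f_i` is a generalized `φ`-contraction and `K` is
nonempty bounded with diameter `a`, then `diam (f_{α|_k}(K_k)) ≤ φ^k(a)` (here a code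
of length `k+1` gives the bound `φ^{k+1}(a)`), and consequently the diameters tend
to `0`. -/
theorem diam_code_pieces_le
    {X : Type*} [MetricSpace X]
    {n m : ℕ} (hn : 0 < n) (hm : 0 < m)
    (φ : ℝ≥0 → ℝ≥0)
    (hmono : Monotone φ) (husc : UpperSemicontinuous φ)
    (hlt : ∀ t : ℝ≥0, 0 < t → φ t < t)
    (f : Fin n → (Fin m → X) → X)
    (hf : ∀ i, ∀ x y : Fin m → X, nndist (f i x) (f i y) ≤ φ (nndist x y))
    (K : Set X) (hKne : K.Nonempty) (a : ℝ≥0)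
    (hKa : EMetric.diam K = (a : ℝ≥0∞)) (α : CodeSpace n m) :
    (∀ k : ℕ, EMetric.diam (fA f k α '' Spow m K k) ≤ ((φ^[k + 1] a : ℝ≥0) : ℝ≥0∞)) ∧
    Tendsto (fun k : ℕ => EMetric.diam (fA f k α '' Spow m K k)) atTop (𝓝 0) :=
  diam_code_pieces_le_general φ hmono husc hlt f hf K a hKa α
end

section
/- Let (X,d) be a complete metric space and S = (f_1,...,f_n) a GIFS of order m with attractor A. Define g : Ω → X by letting g(α) be the unique element of ⋂_{k∈ℕ} A_{α|_k}. Then g is continuous and g(Ω) = A. -/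
open Filter Topology NNReal ENNReal

/-! Nested compact pieces with a one-point intersection eventually lie in any neighbourhood of
that point, and the `k`-th piece of a code only depends on its first `k + 1` symbols: this gives
continuity. Conversely, choosing for every point of `A = ⋃ fᵢ(Aᵐ)` one preimage and iterating
the choice yields an address of the point. -/

lemma lipschitzWith_one_of_nndist_le {Y Z : Type*} [MetricSpace Y] [PseudoMetricSpace Z]
    {φ : ℝ≥0 → ℝ≥0} (hφ : ∀ t, 0 < t → φ t < t) {F : Y → Z}
    (hF : ∀ x y, nndist (F x) (F y) ≤ φ (nndist x y)) : LipschitzWith 1 F := by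
  refine LipschitzWith.mk_one fun x y => ?_
  rcases eq_or_ne x y with rfl | hxy
  · simp
  · exact_mod_cast (hF x y).trans (hφ _ (by rwa [pos_iff_ne_zero, Ne, nndist_eq_zero])).le

section CodeSet

variable {X : Type*} {n m : ℕ} (f : Fin n → (Fin m → X) → X) (A : Set X)

/-- The piece `A_{α|k}` of the attractor addressed by the first `k + 1` symbols of `α`. -/
def codeSet (k : ℕ) (α : CodeSpace n m) : Set X := fA f k α '' Spow m A k

lemma codeSet_zero (α : CodeSpace n m) :
    codeSet f A 0 α = f (α 0) '' Set.univ.pi fun _ => A := rfl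

lemma codeSet_succ (k : ℕ) (α : CodeSpace n m) :
    codeSet f A (k + 1) α =
      f (α 0) '' Set.univ.pi fun i => codeSet f A k (shiftCode α i) := by
  simp only [codeSet]
  rw [← Set.piMap_image_univ_pi, Set.image_image]
  rfl

lemma codeSet_congr : ∀ (k : ℕ) {α β : CodeSpace n m}, (∀ j ≤ k, α j = β j) →
    codeSet f A k α = codeSet f A k β
  | 0, α, β, h => by rw [codeSet_zero, codeSet_zero, h 0 le_rfl]
  | k + 1, α, β, h => by
    have hshift (i : Fin m) : codeSet f A k (shiftCode α i) = codeSet f A k (shiftCode β i) :=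
      codeSet_congr k fun j hj => by simp only [shiftCode, h (j + 1) (by omega)]
    simp only [codeSet_succ, h 0 (Nat.zero_le _), hshift]

variable {f A}

lemma isCompact_codeSet [TopologicalSpace X] (hf : ∀ i, Continuous (f i)) (hA : IsCompact A) :
    ∀ (k : ℕ) (α : CodeSpace n m), IsCompact (codeSet f A k α)
  | 0, α => (isCompact_univ_pi fun _ => hA).image (hf _)
  | k + 1, α => by
    rw [codeSet_succ]
    exact (isCompact_univ_pi fun i => isCompact_codeSet hf hA k _).image (hf _)

lemma codeSet_succ_subset (hfA : ∀ i, f i '' (Set.univ.pi fun _ => A) ⊆ A) :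
    ∀ (k : ℕ) (α : CodeSpace n m), codeSet f A (k + 1) α ⊆ codeSet f A k α
  | 0, α => by
    rw [codeSet_succ, codeSet_zero]
    exact Set.image_mono (Set.pi_mono fun i _ => hfA _)
  | k + 1, α => by
    rw [codeSet_succ, codeSet_succ f A k]
    exact Set.image_mono (Set.pi_mono fun i _ => codeSet_succ_subset hfA k _)

lemma antitone_codeSet (hfA : ∀ i, f i '' (Set.univ.pi fun _ => A) ⊆ A) (α : CodeSpace n m) :
    Antitone fun k => codeSet f A k α :=
  antitone_nat_of_succ_le fun k => codeSet_succ_subset hfA k α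

lemma codeSet_subset (hfA : ∀ i, f i '' (Set.univ.pi fun _ => A) ⊆ A) (k : ℕ)
    (α : CodeSpace n m) : codeSet f A k α ⊆ A :=
  (antitone_codeSet hfA α (Nat.zero_le k)).trans (hfA _)

theorem continuous_of_iInter_codeSet_eq_singleton [TopologicalSpace X] [T2Space X]
    (hf : ∀ i, Continuous (f i)) (hA : IsCompact A)
    (hfA : ∀ i, f i '' (Set.univ.pi fun _ => A) ⊆ A) {g : CodeSpace n m → X}
    (hg : ∀ α, ⋂ k, codeSet f A k α = {g α}) : Continuous g := by
  refine continuous_iff_continuousAt.2 fun α U hU => ?_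
  obtain ⟨N, hN⟩ : ∃ N, codeSet f A N α ⊆ U :=
    exists_subset_nhds_of_isCompact (antitone_codeSet hfA α).directed_ge
      (isCompact_codeSet hf hA · α) fun x hx => by
        rw [hg, Set.mem_singleton_iff] at hx
        exact hx ▸ hU
  have hcyl : (Set.Iic N).pi (fun j => {α j}) ∈ 𝓝 α :=
    (isOpen_set_pi (Set.finite_Iic N) fun _ _ => isOpen_discrete _).mem_nhds
      fun _ _ => rfl
  refine Filter.mem_map.2 (Filter.mem_of_superset hcyl fun β hβ => ?_)
  have hgβ : g β ∈ codeSet f A N β := Set.mem_iInter.1 ((hg β).ge (Set.mem_singleton _)) N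
  rw [codeSet_congr f A N fun j hj => hβ j hj] at hgβ
  exact hN hgβ

end CodeSet

section Itinerary

variable {ι : Type*} {n m : ℕ} (i : ι → Fin n) (x : ι → Fin m → ι)

/-- `i a` and `x a` record one chosen preimage `a = f_{i a}(x a)`. -/
def itineraryLevel : ∀ k, ι → OmegaL n m k
  | 0, a => i a
  | k + 1, a => fun j => itineraryLevel k (x a j)

def itinerary (a : ι) : CodeSpace n m := fun k => itineraryLevel i x k a

lemma shiftCode_itinerary (a : ι) (j : Fin m) :
    shiftCode (itinerary i x a) j = itinerary i x (x a j) := rfl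

lemma mem_codeSet_itinerary {X : Type*} {f : Fin n → (Fin m → X) → X} {A : Set X}
    {e : ι → X} (he : ∀ a, f (i a) (e ∘ x a) = e a) (heA : ∀ a, e a ∈ A) :
    ∀ (k : ℕ) (a : ι), e a ∈ codeSet f A k (itinerary i x a)
  | 0, a => ⟨e ∘ x a, fun j _ => heA _, he a⟩
  | k + 1, a => by
    rw [codeSet_succ]
    refine ⟨e ∘ x a, fun j _ => ?_, he a⟩
    show e (x a j) ∈ codeSet f A k (shiftCode (itinerary i x a) j)
    rw [shiftCode_itinerary]
    exact mem_codeSet_itinerary he heA k _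

end Itinerary

lemma exists_forall_mem_codeSet {X : Type*} {n m : ℕ} {f : Fin n → (Fin m → X) → X} {A : Set X}
    (hA : A ⊆ ⋃ i, f i '' Set.univ.pi fun _ => A) {a : X} (ha : a ∈ A) :
    ∃ α : CodeSpace n m, ∀ k, a ∈ codeSet f A k α := by
  have hpre (b : A) : ∃ (i : Fin n) (y : Fin m → A), f i (Subtype.val ∘ y) = b := by
    obtain ⟨i, y, hy, hyb⟩ := Set.mem_iUnion.1 (hA b.2)
    exact ⟨i, fun j => ⟨y j, hy j trivial⟩, hyb⟩
  choose i y hy using hpre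
  exact ⟨itinerary i y ⟨a, ha⟩,
    fun k => mem_codeSet_itinerary i y hy (fun b => b.2) k ⟨a, ha⟩⟩

theorem coding_map_continuous_surjective_general
    {X : Type*} [MetricSpace X]
    {n m : ℕ}
    (φ : ℝ≥0 → ℝ≥0)
    (hlt : ∀ t : ℝ≥0, 0 < t → φ t < t)
    (f : Fin n → (Fin m → X) → X)
    (hf : ∀ i, ∀ x y : Fin m → X, nndist (f i x) (f i y) ≤ φ (nndist x y))
    (A : Set X) (hAc : IsCompact A)
    (hAfix : (⋃ i, f i '' Set.univ.pi fun _ => A) = A)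
    (g : CodeSpace n m → X)
    (hg : ∀ α : CodeSpace n m, (⋂ k : ℕ, fA f k α '' Spow m A k) = {g α}) :
    Continuous g ∧ Set.range g = A := by
  have hfc (i : Fin n) : Continuous (f i) := (lipschitzWith_one_of_nndist_le hlt (hf i)).continuous
  have hfA (i : Fin n) : f i '' (Set.univ.pi fun _ => A) ⊆ A :=
    (Set.subset_iUnion (fun i => f i '' Set.univ.pi fun _ => A) i).trans hAfix.subset
  have hg_mem (α : CodeSpace n m) (k : ℕ) : g α ∈ codeSet f A k α :=
    Set.mem_iInter.1 ((hg α).ge (Set.mem_singleton _)) k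
  refine ⟨continuous_of_iInter_codeSet_eq_singleton hfc hAc hfA hg,
    Set.Subset.antisymm ?_ fun a ha => ?_⟩
  · rintro _ ⟨α, rfl⟩
    exact codeSet_subset hfA 0 α (hg_mem α 0)
  · obtain ⟨α, hα⟩ := exists_forall_mem_codeSet hAfix.symm.subset ha
    exact ⟨α, ((hg α).le (Set.mem_iInter.2 hα)).symm⟩

/-- The coding map `g : Ω → X`, sending `α` to the unique point of
`⋂_k A_{α|_k}`, is continuous and `g(Ω) = A`. -/
theorem coding_map_continuous_surjective
    {X : Type*} [MetricSpace X] [CompleteSpace X]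
    {n m : ℕ} (hn : 0 < n) (hm : 0 < m)
    (φ : ℝ≥0 → ℝ≥0)
    (hmono : Monotone φ) (husc : UpperSemicontinuous φ)
    (hlt : ∀ t : ℝ≥0, 0 < t → φ t < t)
    (f : Fin n → (Fin m → X) → X)
    (hf : ∀ i, ∀ x y : Fin m → X, nndist (f i x) (f i y) ≤ φ (nndist x y))
    (A : Set X) (hAne : A.Nonempty) (hAc : IsCompact A)
    (hAfix : (⋃ i, f i '' Set.univ.pi fun _ => A) = A)
    (g : CodeSpace n m → X)
    (hg : ∀ α : CodeSpace n m, (⋂ k : ℕ, fA f k α '' Spow m A k) = {g α}) :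
    Continuous g ∧ Set.range g = A :=
  coding_map_continuous_surjective_general φ hlt f hf A hAc hAfix g hg
end

section
/- Let (X,d) be a complete metric space, S = (f_1,...,f_n) a GIFS of order m with address map g : Ω → X, and define g_m : Ω^m → X^m by g_m(α_1,...,α_m) = (g(α_1),...,g(α_m)). Then for every i = 1,...,n, f_i ∘ g_m = g ∘ τ_i, where τ_i : Ω^m → Ω are the code-space shift maps. -/
open Filter Topology NNReal ENNReal

/-!
The address `g α` is characterised as the unique point of `⋂ₖ f_{α|ₖ}(Aₖ)`. Since
`f_{τ_i(α_1,…,α_m)|_{k+1}} = f_i ∘ (f_{α_1|_k} × ⋯ × f_{α_m|_k})`, applying `f_i` to the points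
`g α_j ∈ f_{α_j|_k}(A_k)` lands in the level `k + 1` of the intersection for `τ_i(α_1,…,α_m)`,
and invariance of `A` handles level `0`. So `f_i(g α_1,…,g α_m)` lies in that intersection,
which is `{g (τ_i(α_1,…,α_m))}`.
-/

open Set

section

variable {X : Type*} {n m : ℕ} {f : Fin n → (Fin m → X) → X} {K : Set X}

theorem mem_of_mem_image_fA_zero (hK : ∀ i, f i '' univ.pi (fun _ => K) ⊆ K)
    {α : CodeSpace n m} {y : X} (hy : y ∈ fA f 0 α '' Spow m K 0) : y ∈ K :=
  hK (α 0) hy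

theorem mem_image_fA_succ_tau {k : ℕ} (i : Fin n) {a : Fin m → CodeSpace n m} {y : Fin m → X}
    (hy : ∀ j, y j ∈ fA f k (a j) '' Spow m K k) :
    f i y ∈ fA f (k + 1) (tau i a) '' Spow m K (k + 1) := by
  choose x hx hxy using hy
  exact ⟨(x : Fin m → Xk X m k), fun j _ => hx j, congrArg (f i) (funext hxy)⟩

end

theorem coding_map_conjugates_general
    {X : Type*}
    {n m : ℕ}
    (f : Fin n → (Fin m → X) → X)
    (A : Set X)
    (hAfix : (⋃ i, f i '' Set.univ.pi fun _ => A) = A)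
    (g : CodeSpace n m → X)
    (hg : ∀ α : CodeSpace n m, (⋂ k : ℕ, fA f k α '' Spow m A k) = {g α})
    (i : Fin n) (a : Fin m → CodeSpace n m) :
    f i (fun j => g (a j)) = g (tau i a) := by
  have hA : ∀ i, f i '' univ.pi (fun _ => A) ⊆ A := fun i =>
    (subset_iUnion (fun i => f i '' univ.pi fun _ => A) i).trans hAfix.subset
  have hmem : ∀ α k, g α ∈ fA f k α '' Spow m A k := fun α =>
    mem_iInter.mp ((hg α).symm ▸ mem_singleton (g α))
  suffices f i (fun j => g (a j)) ∈ ⋂ k, fA f k (tau i a) '' Spow m A k by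
    rwa [hg] at this
  refine mem_iInter.mpr fun k => ?_
  cases k with
  | zero => exact ⟨_, fun j _ => mem_of_mem_image_fA_zero hA (hmem (a j) 0), rfl⟩
  | succ k => exact mem_image_fA_succ_tau i fun j => hmem (a j) k

/-- With `g_m(α_1,…,α_m) = (g α_1, …, g α_m)`, for every
`i = 1,…,n` one has `f_i ∘ g_m = g ∘ τ_i`. -/
theorem coding_map_conjugates
    {X : Type*} [MetricSpace X] [CompleteSpace X]
    {n m : ℕ} (hn : 0 < n) (hm : 0 < m)
    (φ : ℝ≥0 → ℝ≥0)
    (hmono : Monotone φ) (husc : UpperSemicontinuous φ)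
    (hlt : ∀ t : ℝ≥0, 0 < t → φ t < t)
    (f : Fin n → (Fin m → X) → X)
    (hf : ∀ i, ∀ x y : Fin m → X, nndist (f i x) (f i y) ≤ φ (nndist x y))
    (A : Set X) (hAne : A.Nonempty) (hAc : IsCompact A)
    (hAfix : (⋃ i, f i '' Set.univ.pi fun _ => A) = A)
    (g : CodeSpace n m → X)
    (hg : ∀ α : CodeSpace n m, (⋂ k : ℕ, fA f k α '' Spow m A k) = {g α})
    (i : Fin n) (a : Fin m → CodeSpace n m) :
    f i (fun j => g (a j)) = g (tau i a) :=
  coding_map_conjugates_general f A hAfix g hg i a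
end

section
/- Let (X,d) be a complete metric space and S = (f_1,...,f_n) a GIFS of order m consisting of generalized φ-contractions, with attractor A_S. Then for every nonempty compact K ⊂ X there exists a closed bounded set H ⊂ X with K ⊂ H and F_S(H,...,H) ⊂ H, where F_S(D_1,...,D_m) = ⋃_i f_i(D_1 × ... × D_m). -/
open Filter Topology NNReal

/-!
Since `φ t < t` for `t > 0` and `φ` is monotone, `φ t ≤ t` for all `t`, so every `f i` is
nonexpansive. A nonexpansive map sends points within `r` of the invariant set `A` to points
within `r` of `A`, so every closed thickening of `A` is invariant; a large enough one contains
the bounded set `K`, and it is bounded because `A` is.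
-/

open Metric Set

theorem apply_le_self_of_monotone {φ : ℝ≥0 → ℝ≥0} (hmono : Monotone φ)
    (hlt : ∀ t : ℝ≥0, 0 < t → φ t < t) (s : ℝ≥0) : φ s ≤ s := by
  rcases (zero_le : 0 ≤ s).eq_or_lt with rfl | hs
  · by_contra! h
    exact (hlt _ h).not_ge (hmono zero_le)
  · exact (hlt s hs).le

namespace LipschitzWith

variable {ι Y : Type*} {X : ι → Type*} [Fintype ι] [∀ j, PseudoMetricSpace (X j)]
  [PseudoMetricSpace Y] {g : (∀ j, X j) → Y} {A : ∀ j, Set (X j)} {B : Set Y}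

theorem mapsTo_pi_thickening (hg : LipschitzWith 1 g) (hAB : MapsTo g (univ.pi A) B)
    {ε : ℝ} (hε : 0 < ε) :
    MapsTo g (univ.pi fun j => thickening ε (A j)) (thickening ε B) := by
  intro x hx
  choose b hbA hxb using fun j => mem_thickening_iff.1 (hx j (mem_univ j))
  refine mem_thickening_iff.2 ⟨g b, hAB fun j _ => hbA j, ?_⟩
  calc dist (g x) (g b) ≤ dist x b := by simpa using hg.dist_le_mul x b
    _ < ε := (dist_pi_lt_iff hε).2 hxb

theorem mapsTo_pi_cthickening (hg : LipschitzWith 1 g) (hAB : MapsTo g (univ.pi A) B) (δ : ℝ) :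
    MapsTo g (univ.pi fun j => cthickening δ (A j)) (cthickening δ B) := by
  intro x hx
  rw [cthickening_eq_iInter_thickening'']
  refine mem_iInter₂.2 fun ε hε => ?_
  have hε0 : 0 < ε := (le_max_left 0 δ).trans_lt hε
  exact hg.mapsTo_pi_thickening hAB hε0 fun j _ =>
    cthickening_subset_thickening' hε0 ((le_max_right 0 δ).trans_lt hε) _ (hx j (mem_univ j))

end LipschitzWith

theorem exists_closed_bounded_invariant_general
    {X : Type*} [MetricSpace X]
    {m n : ℕ}
    (φ : ℝ≥0 → ℝ≥0)
    (hmono : Monotone φ)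
    (hlt : ∀ t : ℝ≥0, 0 < t → φ t < t)
    (f : Fin n → (Fin m → X) → X)
    (hf : ∀ i, ∀ x y : Fin m → X, nndist (f i x) (f i y) ≤ φ (nndist x y))
    (A : Set X) (hAne : A.Nonempty) (hAc : IsCompact A)
    (hAfix : (⋃ i, f i '' Set.univ.pi fun _ => A) = A)
    (K : Set X) (hKc : IsCompact K) :
    ∃ H : Set X, IsClosed H ∧ Bornology.IsBounded H ∧ K ⊆ H ∧
      (⋃ i, f i '' Set.univ.pi fun _ => H) ⊆ H := by
  obtain ⟨a, ha⟩ := hAne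
  obtain ⟨r, hKr⟩ := hKc.isBounded.subset_closedBall a
  refine ⟨cthickening r A, isClosed_cthickening, hAc.isBounded.cthickening,
    hKr.trans (closedBall_subset_cthickening ha r), iUnion_subset fun i => ?_⟩
  have hlip : LipschitzWith 1 (f i) := .mk_one fun x y => by
    exact_mod_cast (hf i x y).trans (apply_le_self_of_monotone hmono hlt _)
  have hA : MapsTo (f i) (univ.pi fun _ => A) A :=
    image_subset_iff.1 ((subset_iUnion _ i).trans hAfix.subset)
  exact (hlip.mapsTo_pi_cthickening hA r).image_subset

/-- For a GIFS of generalized `φ`-contractions on a complete metric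
space with attractor `A_S`, every nonempty compact `K ⊆ X` is contained in a closed
bounded set `H` with `F_S(H,…,H) = ⋃ i, f_i(H × ⋯ × H) ⊆ H`. -/
theorem exists_closed_bounded_invariant
    {X : Type*} [MetricSpace X] [CompleteSpace X]
    {m n : ℕ} (hm : 0 < m) (hn : 0 < n)
    (φ : ℝ≥0 → ℝ≥0)
    (hmono : Monotone φ) (husc : UpperSemicontinuous φ)
    (hlt : ∀ t : ℝ≥0, 0 < t → φ t < t)
    (f : Fin n → (Fin m → X) → X)
    (hf : ∀ i, ∀ x y : Fin m → X, nndist (f i x) (f i y) ≤ φ (nndist x y))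
    (A : Set X) (hAne : A.Nonempty) (hAc : IsCompact A)
    (hAfix : (⋃ i, f i '' Set.univ.pi fun _ => A) = A)
    (K : Set X) (hKc : IsCompact K) (hKne : K.Nonempty) :
    ∃ H : Set X, IsClosed H ∧ Bornology.IsBounded H ∧ K ⊆ H ∧
      (⋃ i, f i '' Set.univ.pi fun _ => H) ⊆ H :=
  exists_closed_bounded_invariant_general φ hmono hlt f hf A hAne hAc hAfix K hKc
end

section
/- Let X be a Hausdorff topological space and S = (f_1,...,f_n) a topological GIFS of order m. If H, D ∈ 𝒦(X) satisfy F_S(H,...,H) ⊂ H and F_S(D,...,D) ⊂ D, then for every α ∈ Ω, ⋂_{k∈ℕ} f_{α|_k}(H_k) = ⋂_{k∈ℕ} f_{α|_k}(D_k). -/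
open Filter Topology NNReal

lemma Spow_mono {X : Type*} (m : ℕ) {A B : Set X} (h : A ⊆ B) :
    ∀ k, Spow m A k ⊆ Spow m B k
  | 0 => fun _ hx i hi => h (hx i hi)
  | k + 1 => fun _ hx i hi => Spow_mono m h k (hx i hi)

lemma iInter_image_fA_Spow_mono {X : Type*} {n m : ℕ} (f : Fin n → (Fin m → X) → X)
    (α : CodeSpace n m) {A B : Set X} (h : A ⊆ B) :
    (⋂ k : ℕ, fA f k α '' Spow m A k) ⊆ ⋂ k : ℕ, fA f k α '' Spow m B k :=
  Set.iInter_mono fun k => Set.image_mono (Spow_mono m h k)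

lemma iInter_image_fA_Spow_eq_of_subset {X : Type*} {n m : ℕ}
    (f : Fin n → (Fin m → X) → X) (α : CodeSpace n m) {A B : Set X} (h : A ⊆ B) {x : X}
    (hA : (⋂ k : ℕ, fA f k α '' Spow m A k).Nonempty)
    (hB : (⋂ k : ℕ, fA f k α '' Spow m B k) = {x}) :
    (⋂ k : ℕ, fA f k α '' Spow m A k) = {x} :=
  hA.subset_singleton_iff.mp (hB ▸ iInter_image_fA_Spow_mono f α h)

theorem tgifs_inter_independent_general
    {X : Type*} [TopologicalSpace X]
    {n m : ℕ}
    (f : Fin n → (Fin m → X) → X)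
    -- condition (i) of a TGIFS
    (h1 : ∀ K : Set X, IsCompact K → K.Nonempty →
      ∃ H : Set X, IsCompact H ∧ H.Nonempty ∧ K ⊆ H ∧
        (⋃ i, f i '' Set.univ.pi fun _ => H) ⊆ H)
    -- condition (ii) of a TGIFS
    (h2 : ∀ H : Set X, IsCompact H → H.Nonempty →
      (⋃ i, f i '' Set.univ.pi fun _ => H) ⊆ H →
      ∀ α : CodeSpace n m, ∃ x : X, (⋂ k : ℕ, fA f k α '' Spow m H k) = {x})
    (H D : Set X) (hHc : IsCompact H) (hHne : H.Nonempty)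
    (hDc : IsCompact D) (hDne : D.Nonempty)
    (hH : (⋃ i, f i '' Set.univ.pi fun _ => H) ⊆ H)
    (hD : (⋃ i, f i '' Set.univ.pi fun _ => D) ⊆ D)
    (α : CodeSpace n m) :
    (⋂ k : ℕ, fA f k α '' Spow m H k) = ⋂ k : ℕ, fA f k α '' Spow m D k := by
  obtain ⟨H', hH'c, hH'ne, hsub, hH'inv⟩ :=
    h1 (H ∪ D) (hHc.union hDc) (hHne.mono Set.subset_union_left)
  obtain ⟨x, hx⟩ := h2 H' hH'c hH'ne hH'inv α
  obtain ⟨xH, hxH⟩ := h2 H hHc hHne hH α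
  obtain ⟨xD, hxD⟩ := h2 D hDc hDne hD α
  rw [iInter_image_fA_Spow_eq_of_subset f α (Set.subset_union_left.trans hsub)
      (hxH ▸ Set.singleton_nonempty xH) hx,
    iInter_image_fA_Spow_eq_of_subset f α (Set.subset_union_right.trans hsub)
      (hxD ▸ Set.singleton_nonempty xD) hx]

/-- For a topological GIFS `(f_1,…,f_n)` on a Hausdorff space: if
`H, D` are nonempty compact sets with `F_S(H,…,H) ⊆ H` and `F_S(D,…,D) ⊆ D`, then for
every code `α ∈ Ω`, `⋂_k f_{α|_k}(H_k) = ⋂_k f_{α|_k}(D_k)`. -/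
theorem tgifs_inter_independent
    {X : Type*} [TopologicalSpace X] [T2Space X]
    {n m : ℕ} (hn : 0 < n) (hm : 0 < m)
    (f : Fin n → (Fin m → X) → X)
    (hcont : ∀ i, Continuous (f i))
    -- condition (i) of a TGIFS
    (h1 : ∀ K : Set X, IsCompact K → K.Nonempty →
      ∃ H : Set X, IsCompact H ∧ H.Nonempty ∧ K ⊆ H ∧
        (⋃ i, f i '' Set.univ.pi fun _ => H) ⊆ H)
    -- condition (ii) of a TGIFS
    (h2 : ∀ H : Set X, IsCompact H → H.Nonempty →
      (⋃ i, f i '' Set.univ.pi fun _ => H) ⊆ H →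
      ∀ α : CodeSpace n m, ∃ x : X, (⋂ k : ℕ, fA f k α '' Spow m H k) = {x})
    (H D : Set X) (hHc : IsCompact H) (hHne : H.Nonempty)
    (hDc : IsCompact D) (hDne : D.Nonempty)
    (hH : (⋃ i, f i '' Set.univ.pi fun _ => H) ⊆ H)
    (hD : (⋃ i, f i '' Set.univ.pi fun _ => D) ⊆ D)
    (α : CodeSpace n m) :
    (⋂ k : ℕ, fA f k α '' Spow m H k) = ⋂ k : ℕ, fA f k α '' Spow m D k :=
  tgifs_inter_independent_general f h1 h2 H D hHc hHne hDc hDne hH hD α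
end

section
/- Let X be a topological space admitting a proper family of compact subsets {D_α : α ∈ ℱ} indexed by a proper tree ℱ, where X itself is compact Hausdorff. Then for every metric d metrizing X, setting a_k = max{diam(D_α) : α ∈ ℱ, |α| = k} (assuming each level of ℱ is finite), we have a_k → 0 as k → ∞. -/
/-!
If the largest diameter on level `k` did not tend to `0`, the nodes `α` with
`diam D_α > ε` would form a subtree (the sets `D_α` shrink along branches) with finite,
nonempty levels, so by Kőnig's lemma it would contain an infinite branch. Along that
branch the compact sets `D_α` decrease to a single point, hence eventually lie in a closed
ball of radius `ε / 2`, contradicting `diam D_α > ε`.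
-/

open Filter Topology

/-- A proper tree: a family of finite sequences of naturals closed under initial
segments, in which every member has at least one but only finitely many immediate
extensions. -/
def ProperTree (F : Set (List ℕ)) : Prop :=
  (∀ α ∈ F, ∀ m ≤ α.length, α.take m ∈ F) ∧
  (∀ α ∈ F, {k : ℕ | α ++ [k] ∈ F}.Finite ∧ {k : ℕ | α ++ [k] ∈ F}.Nonempty)

/-- A proper family of compact sets adjusted to a proper tree `F`:
`D_∅ = X`, `D_α = ⋃ {D_{α⌢k} : α⌢k ∈ F}`, and for every infinite node (branch) `b` of
`F` the intersection `⋂_k D_{b|_k}` is a singleton. -/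
def ProperFamily {X : Type*} [TopologicalSpace X] (F : Set (List ℕ))
    (D : List ℕ → Set X) : Prop :=
  (∀ α ∈ F, IsCompact (D α)) ∧
  D [] = Set.univ ∧
  (∀ α ∈ F, D α = ⋃ k ∈ {k : ℕ | α ++ [k] ∈ F}, D (α ++ [k])) ∧
  (∀ b : ℕ → ℕ, (∀ k : ℕ, List.ofFn (fun i : Fin k => b i) ∈ F) →
    ∃ x : X, (⋂ k : ℕ, D (List.ofFn (fun i : Fin k => b i))) = {x})

theorem List.exists_ofFn_eq_of_take_eq {A : Type*} [Inhabited A] (f : ℕ → List A)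
    (hlen : ∀ k, (f k).length = k) (hcoh : ∀ ⦃i j⦄, i ≤ j → (f j).take i = f i) :
    ∃ b : ℕ → A, ∀ k, List.ofFn (fun i : Fin k => b i) = f k := by
  refine ⟨fun n => (f (n + 1)).getD n default, fun k => ?_⟩
  refine List.ext_getElem (by simp [hlen]) fun i hi _ => ?_
  have hik : i < k := by simpa using hi
  rw [List.getElem_ofFn]
  dsimp only
  rw [← hcoh (Nat.succ_le_of_lt hik), List.getD_eq_getElem _ _ (by simpa [hlen]),
    List.getElem_take]

/-- Kőnig's lemma for prefix-closed sets of lists. -/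
theorem exists_ofFn_mem_of_finite_levels {A : Type*} (B : Set (List A))
    (hcl : ∀ l ∈ B, ∀ m ≤ l.length, l.take m ∈ B)
    (hfin : ∀ k, {l ∈ B | l.length = k}.Finite)
    (hne : ∀ k, ∃ l ∈ B, l.length = k) :
    ∃ b : ℕ → A, ∀ k, List.ofFn (fun i : Fin k => b i) ∈ B := by
  let level (k : ℕ) := {l ∈ B | l.length = k}
  have : ∀ k, Finite (level k) := fun k => (hfin k).to_subtype
  have : ∀ k, Nonempty (level k) := fun k =>
    let ⟨l, hl⟩ := hne k
    ⟨⟨l, hl⟩⟩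
  let π {i j : ℕ} (hij : i ≤ j) (l : level j) : level i :=
    ⟨l.1.take i, hcl _ l.2.1 i (l.2.2.symm ▸ hij), by simp [l.2.2, hij]⟩
  obtain ⟨f, hf⟩ := exists_seq_forall_proj_of_forall_finite π
    (fun i l => Subtype.ext (List.take_of_length_le l.2.2.le))
    (fun i j k hij hjk l => Subtype.ext (by simp [π, List.take_take, min_eq_left hij]))
    (fun i _ => Set.toFinite _)
  have : Nonempty A := by
    obtain ⟨l, -, hl⟩ := hne 1
    exact ⟨l.head (List.ne_nil_of_length_pos (by omega))⟩
  inhabit A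
  obtain ⟨b, hb⟩ := List.exists_ofFn_eq_of_take_eq (fun k => (f k).1) (fun k => (f k).2.2)
    fun i j hij => congrArg Subtype.val (hf hij)
  exact ⟨b, fun k => hb k ▸ (f k).2.1⟩

theorem Metric.exists_diam_le_of_antitone_of_iInter_eq_singleton {X : Type*} [MetricSpace X]
    {C : ℕ → Set X} (hC : Antitone C) (hcpt : ∀ k, IsCompact (C k)) {x : X}
    (hx : ⋂ k, C k = {x}) {ε : ℝ} (hε : 0 < ε) : ∃ k, Metric.diam (C k) ≤ ε := by
  obtain ⟨k, hk⟩ := exists_subset_nhds_of_isCompact hC.directed_ge hcpt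
    (U := Metric.closedBall x (ε / 2)) (by
      rw [hx]
      rintro y rfl
      exact Metric.closedBall_mem_nhds y (by positivity))
  refine ⟨k, ?_⟩
  calc Metric.diam (C k) ≤ Metric.diam (Metric.closedBall x (ε / 2)) :=
        Metric.diam_mono hk Metric.isBounded_closedBall
    _ ≤ 2 * (ε / 2) := Metric.diam_closedBall (by positivity)
    _ = ε := by ring

section ProperFamily

variable {X : Type*} [TopologicalSpace X] {F : Set (List ℕ)} {D : List ℕ → Set X}

theorem ProperFamily.subset_of_append_singleton_mem (hD : ProperFamily F D) {α : List ℕ}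
    (hα : α ∈ F) {k : ℕ} (hk : α ++ [k] ∈ F) : D (α ++ [k]) ⊆ D α := by
  rw [hD.2.2.1 α hα]
  exact Set.subset_biUnion_of_mem (u := fun k => D (α ++ [k])) hk

theorem ProperFamily.antitone_take (hF : ProperTree F) (hD : ProperFamily F D) {α : List ℕ}
    (hα : α ∈ F) : Antitone fun n => D (α.take n) := by
  refine antitone_nat_of_succ_le fun n => ?_
  rcases lt_or_ge n α.length with hn | hn
  · have hsucc : α.take (n + 1) = α.take n ++ [α[n]] := List.take_succ_eq_append_getElem hn
    rw [hsucc]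
    exact hD.subset_of_append_singleton_mem (hF.1 α hα n hn.le) (hsucc ▸ hF.1 α hα _ hn)
  · rw [List.take_of_length_le hn, List.take_of_length_le (by omega)]

theorem ProperFamily.subset_take (hF : ProperTree F) (hD : ProperFamily F D) {α : List ℕ}
    (hα : α ∈ F) (m : ℕ) : D α ⊆ D (α.take m) := by
  simpa [List.take_of_length_le (le_max_right m α.length)] using
    hD.antitone_take hF hα (le_max_left m α.length)

theorem ProperFamily.antitone_ofFn (hD : ProperFamily F D) {b : ℕ → ℕ}
    (hb : ∀ k, List.ofFn (fun i : Fin k => b i) ∈ F) :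
    Antitone fun k => D (List.ofFn fun i : Fin k => b i) := by
  refine antitone_nat_of_succ_le fun k => ?_
  have hsucc : (List.ofFn fun i : Fin (k + 1) => b i) =
      (List.ofFn fun i : Fin k => b i) ++ [b k] := by
    rw [List.ofFn_succ', List.concat_eq_append]
    rfl
  exact hsucc ▸ hD.subset_of_append_singleton_mem (hb k) (hsucc ▸ hb (k + 1))

end ProperFamily

theorem proper_family_diam_tendsto_zero_general
    {X : Type*} [t : TopologicalSpace X]
    (F : Set (List ℕ)) (hF : ProperTree F)
    (D : List ℕ → Set X) (hD : ProperFamily F D)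
    (hlevels : ∀ k : ℕ, {α ∈ F | α.length = k}.Finite)
    (dm : MetricSpace X)
    (hdm : dm.toUniformSpace.toTopologicalSpace = t) :
    ∀ ε > (0 : ℝ), ∃ N : ℕ, ∀ k ≥ N, ∀ α ∈ F, α.length = k →
      @Metric.diam X dm.toPseudoMetricSpace (D α) ≤ ε := by
  subst hdm
  intro ε hε
  by_contra! hbad
  set B := {α ∈ F | ε < Metric.diam (D α)}
  have hBcl : ∀ α ∈ B, ∀ m ≤ α.length, α.take m ∈ B := fun α hα m hm =>
    ⟨hF.1 α hα.1 m hm, hα.2.trans_le <|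
      Metric.diam_mono (hD.subset_take hF hα.1 m) (hD.1 _ (hF.1 α hα.1 m hm)).isBounded⟩
  have hBne : ∀ k, ∃ α ∈ B, α.length = k := fun k => by
    obtain ⟨n, hkn, α, hαF, rfl, hα⟩ := hbad k
    exact ⟨α.take k, hBcl α ⟨hαF, hα⟩ k hkn, by simpa using hkn⟩
  obtain ⟨b, hb⟩ := exists_ofFn_mem_of_finite_levels B hBcl
    (fun k => (hlevels k).subset fun α hα => ⟨hα.1.1, hα.2⟩) hBne
  obtain ⟨x, hx⟩ := hD.2.2.2 b fun k => (hb k).1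
  obtain ⟨k, hk⟩ := Metric.exists_diam_le_of_antitone_of_iInter_eq_singleton
    (hD.antitone_ofFn fun k => (hb k).1) (fun k => hD.1 _ (hb k).1) hx hε
  exact (hb k).2.not_ge hk

/-- If a compact Hausdorff space `X` admits a proper family of
compact sets adjusted to a proper tree `F` whose levels are finite, then for every
metric `d` metrizing `X`, the maximal diameter of the sets of level `k` tends to `0`:
for all `ε > 0` eventually all level-`k` sets have diameter `≤ ε`. -/
theorem proper_family_diam_tendsto_zero
    {X : Type*} [t : TopologicalSpace X] [CompactSpace X] [T2Space X]
    (F : Set (List ℕ)) (hF : ProperTree F) (hne : [] ∈ F)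
    (D : List ℕ → Set X) (hD : ProperFamily F D)
    (hlevels : ∀ k : ℕ, {α ∈ F | α.length = k}.Finite)
    (dm : MetricSpace X)
    (hdm : dm.toUniformSpace.toTopologicalSpace = t) :
    ∀ ε > (0 : ℝ), ∃ N : ℕ, ∀ k ≥ N, ∀ α ∈ F, α.length = k →
      @Metric.diam X dm.toPseudoMetricSpace (D α) ≤ ε :=
  proper_family_diam_tendsto_zero_general (t := t) F hF D hD hlevels dm hdm
end
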